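/- With $0<|x|<1$, $r>1$, $s=r+1$, and $f_{i,j}(z)$ as in the $\mathcal{W}_{q,t}(\mathfrak{sl}(2|1))$ setting, for integers $i,j \geq 1$ and $k$ with $i-k \geq 1$ and $j+k \geq 1$, the identity $f_{1,i}(z)\, f_{1,j}(x^{i-j-2k} z) = f_{1,i-k}(x^{-k} z)\, f_{1,j+k}(x^{i-j-k} z)$ holds as formal power series in $z$. -/

import Mathlib

/-!
For `t ≥ 1` the coefficient of `z^n/n` in `-log f_{1,t}(z)` is `A_n [(s-t)n]_x` with `A_n`
independent of `t`, and rescaling `z ↦ x^e z` multiplies it by `x^{en}`. Taking logarithms, the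
identity therefore reduces coefficientwise to
`[p] + [q] x^{q-p-2κ} = [p+κ] x^{-κ} + [q-κ] x^{q-p-κ}` (with `p = (s-i)n`, `q = (s-j)n`,
`κ = kn`), whose two sides have the same numerator `x^p - x^{-p-2κ} + x^{2q-p-2κ} - x^{-p}`.
The coefficients grow at most geometrically in `n`, so all four logarithmic series converge
near `z = 0`.
-/

/-- The q-integer with real index: `[a]_x = (x^a - x^{-a})/(x - x⁻¹)`. -/
noncomputable def qint (x a : ℝ) : ℝ := (x ^ a - x ^ (-a)) / (x - x⁻¹)

/-- The structure function
`f_{i,j}(z) = exp(-∑_{m≥1} (1/m) [(r-1)m][rm][min(i,j)m][(s-max(i,j))m]/([m][sm]) (x-x⁻¹)² z^m)`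
with `s = r+1`, as a function of `z` (convergent for small `‖z‖`). -/
noncomputable def ff (x r : ℝ) (i j : ℕ) (z : ℂ) : ℂ :=
  Complex.exp (-∑' m : ℕ,
    ((qint x ((r - 1) * (m + 1)) * qint x (r * (m + 1)) * qint x ((min i j : ℝ) * (m + 1)) *
        qint x ((r + 1 - (max i j : ℝ)) * (m + 1)) /
        (qint x ((m : ℝ) + 1) * qint x ((r + 1) * (m + 1))) * (x - x⁻¹) ^ 2 : ℝ) : ℂ)
      * z ^ (m + 1) / ((m : ℂ) + 1))

/-- The rational function `Δ_i(z) = (1-x^{2r-i}z)(1-x^{-2r+i}z)/((1-x^i z)(1-x^{-i}z))`. -/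
noncomputable def Dlt (x r : ℝ) (i : ℕ) (z : ℂ) : ℂ :=
  ((1 - ((x ^ (2 * r - (i : ℝ)) : ℝ) : ℂ) * z) * (1 - ((x ^ ((i : ℝ) - 2 * r) : ℝ) : ℂ) * z)) /
    ((1 - ((x ^ (i : ℝ) : ℝ) : ℂ) * z) * (1 - ((x ^ (-(i : ℝ)) : ℝ) : ℂ) * z))

open Real Filter Topology Asymptotics

section qint

variable {x : ℝ}

lemma qint_shift (hx : 0 < x) (p q κ : ℝ) :
    qint x p + qint x q * x ^ (q - p - 2 * κ)
      = qint x (p + κ) * x ^ (-κ) + qint x (q - κ) * x ^ (q - p - κ) := by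
  simp only [qint, div_mul_eq_mul_div, sub_mul, ← rpow_add hx]
  ring_nf

lemma qint_eq_div (a : ℝ) : qint x a = (x ^ (-a) - x ^ a) / (x⁻¹ - x) := by
  rw [qint, ← neg_sub, ← neg_sub x⁻¹, neg_div_neg_eq]

lemma inv_sub_self_pos (hx0 : 0 < x) (hx1 : x < 1) : 0 < x⁻¹ - x := by
  linarith [one_lt_inv₀ hx0 |>.2 hx1]

lemma qint_pos (hx0 : 0 < x) (hx1 : x < 1) {a : ℝ} (ha : 0 < a) : 0 < qint x a := by
  rw [qint_eq_div]
  have : x ^ a < x ^ (-a) := rpow_lt_rpow_of_exponent_gt hx0 hx1 (by linarith)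
  exact div_pos (by linarith) (inv_sub_self_pos hx0 hx1)

lemma abs_qint_le (hx0 : 0 < x) (hx1 : x < 1) (a : ℝ) :
    |qint x a| ≤ x ^ (-|a|) / (x⁻¹ - x) := by
  rw [qint_eq_div, abs_div, abs_of_pos (inv_sub_self_pos hx0 hx1)]
  refine div_le_div_of_nonneg_right ?_ (inv_sub_self_pos hx0 hx1).le
  have h₁ : x ^ a ≤ x ^ (-|a|) := rpow_le_rpow_of_exponent_ge hx0 hx1.le (neg_abs_le a)
  have h₂ : x ^ (-a) ≤ x ^ (-|a|) :=
    rpow_le_rpow_of_exponent_ge hx0 hx1.le (neg_le_neg (le_abs_self a))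
  have := rpow_pos_of_pos hx0 a
  have := rpow_pos_of_pos hx0 (-a)
  exact abs_sub_le_iff.2 ⟨by linarith, by linarith⟩

lemma le_qint (hx0 : 0 < x) (hx1 : x < 1) {a b : ℝ} (hab : a ≤ b) :
    x ^ (-b) * (1 - x ^ (2 * a)) / (x⁻¹ - x) ≤ qint x b := by
  rw [qint_eq_div]
  refine div_le_div_of_nonneg_right ?_ (inv_sub_self_pos hx0 hx1).le
  have : x ^ b ≤ x ^ (-b + 2 * a) := rpow_le_rpow_of_exponent_ge hx0 hx1.le (by linarith)
  rw [rpow_add hx0] at this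
  linarith

end qint

lemma rpow_mul_succ {x : ℝ} (hx : 0 ≤ x) (a : ℝ) (n : ℕ) :
    x ^ (a * (n + 1)) = (x ^ a) ^ (n + 1) := by
  exact_mod_cast rpow_mul_natCast hx a (n + 1)

section asymptotics

variable {x : ℝ} (hx0 : 0 < x) (hx1 : x < 1)
include hx0 hx1

lemma isBigO_qint (a : ℝ) :
    (fun n : ℕ => qint x (a * (n + 1))) =O[atTop] fun n => (x ^ (-|a|)) ^ n := by
  refine IsBigO.of_bound (x ^ (-|a|) / (x⁻¹ - x)) (Eventually.of_forall fun n => ?_)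
  have hρ := rpow_pos_of_pos hx0 (-|a|)
  calc ‖qint x (a * (n + 1))‖ ≤ x ^ (-|a| * (n + 1)) / (x⁻¹ - x) := by
        simpa [abs_mul, abs_of_pos (Nat.cast_add_one_pos (α := ℝ) n)]
          using abs_qint_le hx0 hx1 (a * (n + 1))
    _ = x ^ (-|a|) / (x⁻¹ - x) * ‖(x ^ (-|a|)) ^ n‖ := by
        rw [rpow_mul_succ hx0.le, norm_pow, norm_of_nonneg hρ.le, pow_succ]
        ring

lemma isBigO_inv_qint {a : ℝ} (ha : 0 < a) :
    (fun n : ℕ => (qint x (a * (n + 1)))⁻¹) =O[atTop] fun n => (x ^ a) ^ n := by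
  have hw := inv_sub_self_pos hx0 hx1
  have hρ := rpow_pos_of_pos hx0 a
  have hgap : 0 < 1 - x ^ (2 * a) := by
    linarith [rpow_lt_one hx0.le hx1 (by positivity : 0 < 2 * a)]
  refine IsBigO.of_bound ((x⁻¹ - x) * x ^ a / (1 - x ^ (2 * a)))
    (Eventually.of_forall fun n => ?_)
  have hb : a ≤ a * (n + 1) := le_mul_of_one_le_right ha.le (by simp)
  have hlow := le_qint hx0 hx1 hb
  have hlow_pos : 0 < x ^ (-(a * (n + 1))) * (1 - x ^ (2 * a)) / (x⁻¹ - x) := by positivity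
  rw [norm_inv, norm_of_nonneg (hlow_pos.trans_le hlow).le, norm_pow, norm_of_nonneg hρ.le]
  calc (qint x (a * (n + 1)))⁻¹
      ≤ (x ^ (-(a * (n + 1))) * (1 - x ^ (2 * a)) / (x⁻¹ - x))⁻¹ :=
        inv_anti₀ hlow_pos hlow
    _ = (x⁻¹ - x) * x ^ a / (1 - x ^ (2 * a)) * (x ^ a) ^ n := by
        rw [rpow_neg hx0.le, rpow_mul_succ hx0.le, pow_succ]
        field_simp

end asymptotics

noncomputable def ffOneCoeff (x r t : ℝ) (n : ℕ) : ℝ :=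
  qint x ((r - 1) * (n + 1)) * qint x (r * (n + 1)) * qint x ((r + 1 - t) * (n + 1)) /
    qint x ((r + 1) * (n + 1)) * (x - x⁻¹) ^ 2

noncomputable def logTerm (c : ℕ → ℝ) (z : ℂ) (n : ℕ) : ℂ :=
  (c n : ℂ) * z ^ (n + 1) / ((n : ℂ) + 1)

noncomputable def logSeries (c : ℕ → ℝ) (z : ℂ) : ℂ := ∑' n, logTerm c z n

lemma ff_one_eq_exp {x r : ℝ} (hx0 : 0 < x) (hx1 : x < 1) {t : ℕ} (ht : 1 ≤ t) (z : ℂ) :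
    ff x r 1 t z = Complex.exp (-logSeries (ffOneCoeff x r t) z) := by
  have hmin : min ((1 : ℕ) : ℝ) t = 1 := by simp [ht]
  have hmax : max ((1 : ℕ) : ℝ) t = t := by simp [ht]
  have hq : ∀ n : ℕ, qint x ((n : ℝ) + 1) ≠ 0 := fun n =>
    (qint_pos hx0 hx1 (Nat.cast_add_one_pos n)).ne'
  simp only [ff, logSeries, logTerm, ffOneCoeff, hmin, hmax, one_mul]
  congr 3 with n
  congr 3
  field_simp [hq n]

lemma isBigO_ffOneCoeff {x r : ℝ} (hx0 : 0 < x) (hx1 : x < 1) (hr : 0 < r + 1) (t : ℝ) :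
    ∃ ρ : ℝ, ffOneCoeff x r t =O[atTop] fun n => ρ ^ n := by
  refine ⟨x ^ (-|r - 1|) * x ^ (-|r|) * x ^ (-|r + 1 - t|) * x ^ (r + 1), ?_⟩
  have h := ((((isBigO_qint hx0 hx1 (r - 1)).mul (isBigO_qint hx0 hx1 r)).mul
    (isBigO_qint hx0 hx1 (r + 1 - t))).mul (isBigO_inv_qint hx0 hx1 hr)).mul
    (isBigO_const_const ((x - x⁻¹) ^ 2) one_ne_zero atTop)
  exact h.congr (fun n => by simp only [ffOneCoeff, div_eq_mul_inv]) (fun n => by simp [mul_pow])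

lemma eventually_summable_logTerm {c : ℕ → ℝ} {ρ : ℝ} (hc : c =O[atTop] fun n => ρ ^ n) :
    ∀ᶠ z in 𝓝 (0 : ℂ), Summable (logTerm c z) := by
  obtain ⟨C, hC⟩ := hc.bound
  have hr : 0 < (|ρ| + 1)⁻¹ := by positivity
  filter_upwards [Metric.ball_mem_nhds 0 hr] with z hz
  rw [mem_ball_zero_iff] at hz
  have hq : |ρ| * ‖z‖ < 1 :=
    calc |ρ| * ‖z‖ ≤ (|ρ| + 1) * ‖z‖ := by gcongr; linarith
      _ < (|ρ| + 1) * (|ρ| + 1)⁻¹ := by gcongr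
      _ = 1 := mul_inv_cancel₀ (by positivity)
  refine summable_of_isBigO_nat (summable_geometric_of_lt_one (by positivity) hq)
    (IsBigO.of_bound (C * ‖z‖) (hC.mono fun n hn => ?_))
  have hden : 1 ≤ ‖(n : ℂ) + 1‖ := by exact_mod_cast (Nat.le_add_left 1 n)
  calc ‖logTerm c z n‖ ≤ ‖c n‖ * ‖z‖ ^ (n + 1) := by
        rw [logTerm, norm_div, norm_mul, norm_pow, Complex.norm_real]
        exact div_le_self (by positivity) hden
    _ ≤ C * ‖ρ ^ n‖ * ‖z‖ ^ (n + 1) := by gcongr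
    _ = C * ‖z‖ * ‖(|ρ| * ‖z‖) ^ n‖ := by
        rw [norm_pow, norm_pow, norm_mul, norm_norm, Real.norm_eq_abs, Real.norm_eq_abs, abs_abs,
          pow_succ, mul_pow]
        ring

lemma logSeries_add_logSeries {c₁ c₂ c₃ c₄ : ℕ → ℝ} {a₂ a₃ a₄ : ℝ} {z : ℂ}
    (h : ∀ n, c₁ n + c₂ n * a₂ ^ (n + 1) = c₃ n * a₃ ^ (n + 1) + c₄ n * a₄ ^ (n + 1))
    (h₁ : Summable (logTerm c₁ z)) (h₂ : Summable (logTerm c₂ (a₂ * z)))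
    (h₃ : Summable (logTerm c₃ (a₃ * z))) (h₄ : Summable (logTerm c₄ (a₄ * z))) :
    logSeries c₁ z + logSeries c₂ (a₂ * z) = logSeries c₃ (a₃ * z) + logSeries c₄ (a₄ * z) := by
  rw [logSeries, logSeries, logSeries, logSeries, ← h₁.tsum_add h₂, ← h₃.tsum_add h₄]
  congr 1 with n
  have hC : (c₁ n : ℂ) + c₂ n * (a₂ : ℂ) ^ (n + 1)
      = c₃ n * (a₃ : ℂ) ^ (n + 1) + c₄ n * (a₄ : ℂ) ^ (n + 1) := by
    exact_mod_cast h n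
  simp only [logTerm, mul_pow]
  linear_combination z ^ (n + 1) / ((n : ℂ) + 1) * hC

lemma ffOneCoeff_shift {x : ℝ} (hx : 0 < x) (r t u κ : ℝ) (n : ℕ) :
    ffOneCoeff x r t n + ffOneCoeff x r u n * x ^ ((t - u - 2 * κ) * (n + 1))
      = ffOneCoeff x r (t - κ) n * x ^ (-κ * (n + 1))
        + ffOneCoeff x r (u + κ) n * x ^ ((t - u - κ) * (n + 1)) := by
  unfold ffOneCoeff
  linear_combination (norm := ring_nf)
    qint_shift hx ((r + 1 - t) * (n + 1)) ((r + 1 - u) * (n + 1)) (κ * (n + 1)) *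
      (qint x ((r - 1) * (n + 1)) * qint x (r * (n + 1)) / qint x ((r + 1) * (n + 1)) *
        (x - x⁻¹) ^ 2)

lemma ffOneCoeff_fusion {x : ℝ} (hx : 0 < x) (r : ℝ) {i j : ℕ} {k : ℤ}
    (hik : 0 ≤ (i : ℤ) - k) (hjk : 0 ≤ (j : ℤ) + k) (n : ℕ) :
    ffOneCoeff x r i n + ffOneCoeff x r j n * (x ^ ((i : ℤ) - j - 2 * k)) ^ (n + 1)
      = ffOneCoeff x r ((i : ℤ) - k).toNat n * (x ^ (-k)) ^ (n + 1)
        + ffOneCoeff x r ((j : ℤ) + k).toNat n * (x ^ ((i : ℤ) - j - k)) ^ (n + 1) := by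
  have hi : (((i : ℤ) - k).toNat : ℝ) = i - k := by exact_mod_cast Int.toNat_of_nonneg hik
  have hj : (((j : ℤ) + k).toNat : ℝ) = j + k := by exact_mod_cast Int.toNat_of_nonneg hjk
  simp only [hi, hj, ← rpow_intCast, ← rpow_mul_succ hx.le]
  push_cast
  exact ffOneCoeff_shift hx r i j k n

lemma eventually_summable_logTerm_ffOneCoeff {x r : ℝ} (hx0 : 0 < x) (hx1 : x < 1)
    (hr : 0 < r + 1) (t : ℝ) (a : ℂ) :
    ∀ᶠ z in 𝓝 (0 : ℂ), Summable (logTerm (ffOneCoeff x r t) (a * z)) := by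
  obtain ⟨ρ, hρ⟩ := isBigO_ffOneCoeff hx0 hx1 hr t
  exact ((continuous_const_mul a).tendsto' 0 0 (mul_zero a)).eventually
    (eventually_summable_logTerm hρ)

/-- `f_{1,i}(z) f_{1,j}(x^{i-j-2k} z) = f_{1,i-k}(x^{-k} z) f_{1,j+k}(x^{i-j-k} z)`
for `i, j ≥ 1` and `k ∈ ℤ` with `i - k ≥ 1`, `j + k ≥ 1`. -/
theorem f_fusion_shift (x : ℝ) (hx0 : 0 < x) (hx1 : x < 1) (r : ℝ) (hr : 1 < r)
    (i j : ℕ) (hi : 1 ≤ i) (hj : 1 ≤ j) (k : ℤ)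
    (hik : 1 ≤ (i : ℤ) - k) (hjk : 1 ≤ (j : ℤ) + k) :
    ∃ ε > 0, ∀ z : ℂ, ‖z‖ < ε →
      ff x r 1 i z * ff x r 1 j (((x ^ ((i : ℤ) - j - 2 * k) : ℝ) : ℂ) * z)
        = ff x r 1 ((i : ℤ) - k).toNat (((x ^ (-k) : ℝ) : ℂ) * z)
            * ff x r 1 ((j : ℤ) + k).toNat (((x ^ ((i : ℤ) - j - k) : ℝ) : ℂ) * z) := by
  have hsum := eventually_summable_logTerm_ffOneCoeff (r := r) hx0 hx1 (by linarith)
  obtain ⟨ε, hε, hball⟩ := Metric.eventually_nhds_iff.1 <|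
    ((hsum i 1).and (hsum j _)).and ((hsum ((i : ℤ) - k).toNat _).and (hsum ((j : ℤ) + k).toNat _))
  refine ⟨ε, hε, fun z hz => ?_⟩
  obtain ⟨⟨h₁, h₂⟩, h₃, h₄⟩ := hball (by simpa using hz)
  rw [one_mul] at h₁
  rw [ff_one_eq_exp hx0 hx1 hi, ff_one_eq_exp hx0 hx1 hj, ff_one_eq_exp hx0 hx1 (by omega),
    ff_one_eq_exp hx0 hx1 (by omega), ← Complex.exp_add, ← Complex.exp_add, ← neg_add, ← neg_add,
    logSeries_add_logSeries (ffOneCoeff_fusion hx0 r (by omega) (by omega)) h₁ h₂ h₃ h₄]
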